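/- Let p be a prime and n ≥ 1, d ≥ 1 with p > d. Let V = ℚ_p[x_1,…,x_n]_{(d)} with its natural topology as a finite-dimensional ℚ_p-vector space, let Λ be a ℤ_p-lattice in V (a compact open ℤ_p-submodule spanning V), and let μ_Λ be the probability measure on V obtained as the pushforward, along the inclusion Λ ↪ V, of the normalized Haar measure on the compact additive group Λ. If μ_Λ is invariant under the change-of-variables action, i.e. the pushforward of μ_Λ under ρ_{n,d}(g) equals μ_Λ for every g ∈ GL(n,ℤ_p), then Λ = c • L_0 for some c ∈ ℚ_p^×, where L_0 is the monomial lattice. Hence there is, up to scaling, a unique nondegenerate GL(n,ℤ_p)-invariant Gaussian distribution on V. -/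

import Mathlib

open MvPolynomial MeasureTheory Pointwise

noncomputable section

local instance (p : ℕ) [Fact p.Prime] : MeasurableSpace ℚ_[p] := borel _

/-- Index type for the monomials of degree `d` in `n` variables: functions
`v : Fin n → {0,…,d}` with `∑ v i = d`. -/
abbrev MonoIdx (n d : ℕ) := {v : Fin n → Fin (d + 1) // ∑ i, (v i : ℕ) = d}

/-- The change-of-variables action of a matrix `g` on polynomials, induced by the
algebra substitution `x_i ↦ ∑ j, g i j • x_j`. -/
def changeOfVar {K : Type*} [CommSemiring K] {n : ℕ}
    (g : Matrix (Fin n) (Fin n) K) :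
    MvPolynomial (Fin n) K →ₐ[K] MvPolynomial (Fin n) K :=
  aeval fun i => ∑ j, C (g i j) * X j

/-- The homogeneous polynomial of degree `d` with coefficient family `f`. -/
def ofCoeffs (p n d : ℕ) [Fact p.Prime] (f : MonoIdx n d → ℚ_[p]) :
    MvPolynomial (Fin n) ℚ_[p] :=
  ∑ α : MonoIdx n d,
    monomial (Finsupp.equivFunOnFinite.symm fun i => ((α.1 i : ℕ))) (f α)

/-- The change-of-variables action `ρ_{n,d}(g)` of `g ∈ GL(n,ℤ_p)` on
`ℚ_p[x_1,…,x_n]_{(d)}`, read in the coordinates given by the monomial basis. -/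
def coeffAction (p n d : ℕ) [Fact p.Prime] (g : GL (Fin n) ℤ_[p])
    (f : MonoIdx n d → ℚ_[p]) : MonoIdx n d → ℚ_[p] :=
  fun α => coeff (Finsupp.equivFunOnFinite.symm fun i => ((α.1 i : ℕ)))
    (changeOfVar ((g : Matrix (Fin n) (Fin n) ℤ_[p]).map (algebraMap ℤ_[p] ℚ_[p]))
      (ofCoeffs p n d f))

/-- The monomial lattice `L₀`, read in coordinates: the `ℤ_p`-span of the monomial
(standard) basis vectors. -/
def monomialLatticeCoeff (p n d : ℕ) [Fact p.Prime] :
    Submodule ℤ_[p] (MonoIdx n d → ℚ_[p]) :=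
  Submodule.span ℤ_[p] (Set.range fun α : MonoIdx n d => Pi.single α (1 : ℚ_[p]))

/-! ### Auxiliary development -/

namespace InvGauss

variable {n d : ℕ}

lemma idx_le (α : MonoIdx n d) (a : Fin n) : (α.1 a : ℕ) ≤ d :=
  Nat.lt_succ_iff.mp (α.1 a).isLt

lemma idx_ext {α β : MonoIdx n d} (h : ∀ a, (α.1 a : ℕ) = (β.1 a : ℕ)) : α = β :=
  Subtype.ext (funext fun a => Fin.ext (h a))

/-- The index of the monomial `x_i^d`. -/
def eAt (i : Fin n) : MonoIdx n d :=
  ⟨fun a => if a = i then ⟨d, Nat.lt_succ_self d⟩ else ⟨0, Nat.succ_pos d⟩, by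
    simp [apply_ite (Fin.val)]⟩

@[simp] lemma eAt_self (i : Fin n) : ((eAt (d := d) i).1 i : ℕ) = d := by
  simp [eAt]

lemma eAt_ne (i a : Fin n) (h : a ≠ i) : ((eAt (d := d) i).1 a : ℕ) = 0 := by
  simp [eAt, h]

lemma eq_eAt_of_coord {α : MonoIdx n d} {i : Fin n} (h : (α.1 i : ℕ) = d) :
    α = eAt i := by
  have hsum := α.2
  rw [← Finset.add_sum_erase Finset.univ _ (Finset.mem_univ i), h] at hsum
  have hz : ∀ a ∈ Finset.univ.erase i, (α.1 a : ℕ) = 0 :=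
    Finset.sum_eq_zero_iff.mp (by omega)
  refine idx_ext fun a => ?_
  by_cases ha : a = i
  · subst ha; simp [h]
  · rw [eAt_ne i a ha, hz a (Finset.mem_erase.mpr ⟨ha, Finset.mem_univ a⟩)]

lemma pair_le (α : MonoIdx n d) {i b : Fin n} (hib : i ≠ b) :
    (α.1 i : ℕ) + (α.1 b : ℕ) ≤ d := by
  have hsum := α.2
  rw [← Finset.add_sum_erase Finset.univ _ (Finset.mem_univ i)] at hsum
  have hb : b ∈ Finset.univ.erase i := Finset.mem_erase.mpr ⟨(Ne.symm hib), Finset.mem_univ b⟩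
  have h2 : (α.1 b : ℕ) ≤ ∑ x ∈ Finset.univ.erase i, (α.1 x : ℕ) := by
    simpa using Finset.single_le_sum (f := fun a => (α.1 a : ℕ)) (fun a _ => Nat.zero_le _) hb
  omega

/-- Move all of coordinate `b` onto coordinate `i`. -/
def moveAll (α : MonoIdx n d) (i b : Fin n) (hib : i ≠ b) : MonoIdx n d :=
  ⟨fun a => if a = i then ⟨(α.1 i : ℕ) + (α.1 b : ℕ), Nat.lt_succ_of_le (pair_le α hib)⟩
    else if a = b then ⟨0, Nat.succ_pos d⟩ else α.1 a, by
      have hsum := α.2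
      rw [← Finset.add_sum_erase Finset.univ _ (Finset.mem_univ i)] at hsum ⊢
      have hb : b ∈ Finset.univ.erase i :=
        Finset.mem_erase.mpr ⟨(Ne.symm hib), Finset.mem_univ b⟩
      rw [← Finset.add_sum_erase _ _ hb] at hsum
      rw [← Finset.add_sum_erase _ _ hb]
      have h1 : ∀ a ∈ (Finset.univ.erase i).erase b,
          ((if a = i then (⟨(α.1 i : ℕ) + (α.1 b : ℕ), Nat.lt_succ_of_le (pair_le α hib)⟩ : Fin (d+1))
            else if a = b then ⟨0, Nat.succ_pos d⟩ else α.1 a : Fin (d+1)) : ℕ)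
            = (α.1 a : ℕ) := by
        intro a ha
        rcases Finset.mem_erase.mp ha with ⟨hab, ha2⟩
        rcases Finset.mem_erase.mp ha2 with ⟨hai, _⟩
        simp [hai, hab]
      rw [Finset.sum_congr rfl h1]
      simp [Ne.symm hib]
      omega⟩

lemma moveAll_i (α : MonoIdx n d) (i b : Fin n) (hib : i ≠ b) :
    (((moveAll α i b hib).1 i : ℕ)) = (α.1 i : ℕ) + (α.1 b : ℕ) := by
  simp [moveAll]

lemma moveAll_b (α : MonoIdx n d) (i b : Fin n) (hib : i ≠ b) :
    (((moveAll α i b hib).1 b : ℕ)) = 0 := by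
  simp [moveAll, Ne.symm hib]

lemma moveAll_other (α : MonoIdx n d) (i b : Fin n) (hib : i ≠ b) (a : Fin n)
    (hai : a ≠ i) (hab : a ≠ b) :
    (((moveAll α i b hib).1 a : ℕ)) = (α.1 a : ℕ) := by
  simp [moveAll, hai, hab]

variable (p : ℕ) [Fact p.Prime]

/-- The divided-power operator `x_j^k ∂_i^k / k!` in monomial coordinates. -/
def Op (i j : Fin n) (k : ℕ) (f : MonoIdx n d → ℚ_[p]) : MonoIdx n d → ℚ_[p] :=
  fun β => ∑ γ : MonoIdx n d,
    (if ((γ.1 i : ℕ) = (β.1 i : ℕ) + k ∧ (β.1 j : ℕ) = (γ.1 j : ℕ) + k ∧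
        ∀ a : Fin n, a ≠ i → a ≠ j → (γ.1 a : ℕ) = (β.1 a : ℕ))
      then (((γ.1 i : ℕ).choose k : ℚ_[p])) else 0) * f γ

lemma Op_eval {i j : Fin n} (hij : i ≠ j) (k : ℕ) (f : MonoIdx n d → ℚ_[p])
    (β γ₀ : MonoIdx n d)
    (h1 : (γ₀.1 i : ℕ) = (β.1 i : ℕ) + k) (h2 : (β.1 j : ℕ) = (γ₀.1 j : ℕ) + k)
    (h3 : ∀ a : Fin n, a ≠ i → a ≠ j → (γ₀.1 a : ℕ) = (β.1 a : ℕ)) :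
    Op p i j k f β = ((γ₀.1 i : ℕ).choose k : ℚ_[p]) * f γ₀ := by
  rw [Op, Finset.sum_eq_single γ₀]
  · rw [if_pos ⟨h1, h2, h3⟩]
  · intro γ _ hγ
    rw [if_neg, zero_mul]
    rintro ⟨g1, g2, g3⟩
    exact hγ (idx_ext fun a => by
      by_cases hai : a = i
      · subst hai; omega
      · by_cases haj : a = j
        · subst haj; omega
        · rw [g3 a hai haj, h3 a hai haj])
  · intro h; exact absurd (Finset.mem_univ γ₀) h

lemma Op_big {i j : Fin n} (hij : i ≠ j) (f : MonoIdx n d → ℚ_[p]) :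
    Op p i j d f = Pi.single (eAt j) (f (eAt i)) := by
  funext β
  by_cases hβ : β = eAt j
  · subst hβ
    rw [Op_eval p hij d f _ (eAt i) (by rw [eAt_self, eAt_ne j i hij]; omega)
        (by rw [eAt_self, eAt_ne i j (Ne.symm hij)]; omega)
        (fun a hai haj => by rw [eAt_ne i a hai, eAt_ne j a haj]),
      eAt_self, Nat.choose_self, Nat.cast_one, one_mul, Pi.single_eq_same]
  · rw [Pi.single_eq_of_ne hβ]
    refine Finset.sum_eq_zero fun γ _ => ?_
    rw [if_neg, zero_mul]
    rintro ⟨g1, g2, g3⟩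
    have hle := idx_le γ i
    have hβi : (β.1 i : ℕ) = 0 := by omega
    have hγi : (γ.1 i : ℕ) = d := by omega
    have hγ : γ = eAt i := eq_eAt_of_coord hγi
    subst hγ
    rw [eAt_ne i j (Ne.symm hij)] at g2
    exact hβ (eq_eAt_of_coord (by omega))

lemma Op_single {i j : Fin n} (hij : i ≠ j) (k : ℕ) (c : ℚ_[p])
    (γ₀ β₀ : MonoIdx n d)
    (h1 : (γ₀.1 i : ℕ) = (β₀.1 i : ℕ) + k) (h2 : (β₀.1 j : ℕ) = (γ₀.1 j : ℕ) + k)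
    (h3 : ∀ a : Fin n, a ≠ i → a ≠ j → (γ₀.1 a : ℕ) = (β₀.1 a : ℕ)) :
    Op p i j k (Pi.single γ₀ c) = Pi.single β₀ (((γ₀.1 i : ℕ).choose k : ℚ_[p]) * c) := by
  funext β
  by_cases hβ : β = β₀
  · subst hβ
    rw [Op_eval p hij k _ _ γ₀ h1 h2 h3, Pi.single_eq_same, Pi.single_eq_same]
  · rw [Pi.single_eq_of_ne hβ]
    refine Finset.sum_eq_zero fun γ _ => ?_
    by_cases hγ : γ = γ₀
    · subst hγ
      rw [if_neg, zero_mul]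
      rintro ⟨g1, g2, g3⟩
      exact hβ (idx_ext fun a => by
        by_cases hai : a = i
        · subst hai; omega
        · by_cases haj : a = j
          · subst haj; omega
          · rw [← g3 a hai haj, h3 a hai haj])
    · rw [Pi.single_eq_of_ne hγ, mul_zero]

/-- The elementary transvection `x_i ↦ x_i + t x_j` as an element of `GL(n, ℤ_p)`. -/
def Tmat {i j : Fin n} (hij : i ≠ j) (t : ℤ_[p]) : GL (Fin n) ℤ_[p] :=
  ⟨1 + Matrix.single i j t, 1 - Matrix.single i j t,
    by
      have hN : Matrix.single i j t * Matrix.single i j t = 0 :=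
        Matrix.single_mul_single_of_ne (h := Ne.symm hij) ..
      rw [Matrix.mul_sub, Matrix.add_mul, Matrix.add_mul, hN]
      noncomm_ring,
    by
      have hN : Matrix.single i j t * Matrix.single i j t = 0 :=
        Matrix.single_mul_single_of_ne (h := Ne.symm hij) ..
      rw [Matrix.sub_mul, Matrix.mul_add, Matrix.mul_add, hN]
      noncomm_ring⟩

lemma Tmat_entry {i j : Fin n} (hij : i ≠ j) (t : ℤ_[p]) (a b : Fin n) :
    ((Tmat p hij t : Matrix (Fin n) (Fin n) ℤ_[p])).map (algebraMap ℤ_[p] ℚ_[p]) a b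
      = (if a = b then 1 else 0) + (if a = i ∧ b = j then (t : ℚ_[p]) else 0) := by
  simp only [Tmat, Units.val_mk, Matrix.map_apply, Matrix.add_apply, Matrix.one_apply,
    Matrix.single, Matrix.of_apply]
  rw [map_add]
  congr 1
  · split <;> simp
  · by_cases h : i = a ∧ j = b
    · rw [if_pos h, if_pos ⟨h.1.symm, h.2.symm⟩]; rfl
    · rw [if_neg h, if_neg (by tauto), map_zero]

/-- Exponent of the monomial obtained from `γ` by moving `k` from variable `i` to `j`. -/
def σexp (i j : Fin n) (γ : MonoIdx n d) (k : ℕ) : Fin n →₀ ℕ :=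
  Finsupp.equivFunOnFinite.symm fun a =>
    if a = i then (γ.1 i : ℕ) - k else if a = j then (γ.1 j : ℕ) + k else (γ.1 a : ℕ)

lemma prodXpow (e : Fin n → ℕ) :
    (∏ a, (X a : MvPolynomial (Fin n) ℚ_[p]) ^ e a)
      = monomial (Finsupp.equivFunOnFinite.symm e) 1 := by
  rw [monomial_eq, C_1, one_mul,
    Finsupp.prod_fintype _ _ (fun a => pow_zero _)]
  refine Finset.prod_congr rfl fun a _ => ?_
  rw [Finsupp.equivFunOnFinite_symm_apply_apply]

lemma image_monomial {i j : Fin n} (hij : i ≠ j) (t' : ℚ_[p]) (γ : MonoIdx n d)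
    (c : ℚ_[p]) :
    aeval (fun a : Fin n => if a = i then X i + C t' * X j else X a)
        (monomial (Finsupp.equivFunOnFinite.symm fun a => ((γ.1 a : ℕ))) c)
      = ∑ k ∈ Finset.range ((γ.1 i : ℕ) + 1),
          monomial (σexp i j γ k)
            (t' ^ k * (((γ.1 i : ℕ).choose k : ℚ_[p])) * c) := by
  rw [aeval_monomial, Finsupp.prod_fintype _ _ (fun a => pow_zero _)]
  simp only [Finsupp.equivFunOnFinite_symm_apply_apply]
  rw [← Finset.mul_prod_erase Finset.univ _ (Finset.mem_univ i), if_pos rfl]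
  have hP : (∏ a ∈ Finset.univ.erase i,
        (if a = i then X i + C t' * X j else X a) ^ (γ.1 a : ℕ))
      = ∏ a ∈ Finset.univ.erase i, (X a : MvPolynomial (Fin n) ℚ_[p]) ^ (γ.1 a : ℕ) :=
    Finset.prod_congr rfl fun a ha => by rw [if_neg (Finset.mem_erase.mp ha).1]
  rw [hP, add_comm (X i) (C t' * X j), add_pow, Finset.sum_mul, Finset.mul_sum]
  refine Finset.sum_congr rfl fun k hk => ?_
  have hk' : k ≤ (γ.1 i : ℕ) := Nat.lt_succ_iff.mp (Finset.mem_range.mp hk)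
  have hprod : ((X i : MvPolynomial (Fin n) ℚ_[p]) ^ ((γ.1 i : ℕ) - k)) *
        ((X j : MvPolynomial (Fin n) ℚ_[p]) ^ k *
          ∏ a ∈ Finset.univ.erase i, (X a : MvPolynomial (Fin n) ℚ_[p]) ^ (γ.1 a : ℕ))
      = ∏ a, (X a : MvPolynomial (Fin n) ℚ_[p]) ^
          (if a = i then (γ.1 i : ℕ) - k else if a = j then (γ.1 j : ℕ) + k
            else (γ.1 a : ℕ)) := by
    rw [← Finset.mul_prod_erase Finset.univ
      (f := fun a => (X a : MvPolynomial (Fin n) ℚ_[p]) ^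
          (if a = i then (γ.1 i : ℕ) - k else if a = j then (γ.1 j : ℕ) + k
            else (γ.1 a : ℕ))) (Finset.mem_univ i), if_pos rfl]
    congr 1
    have : ∀ a ∈ Finset.univ.erase i,
        (X a : MvPolynomial (Fin n) ℚ_[p]) ^
          (if a = i then (γ.1 i : ℕ) - k else if a = j then (γ.1 j : ℕ) + k
            else (γ.1 a : ℕ))
        = (X a : MvPolynomial (Fin n) ℚ_[p]) ^ (γ.1 a : ℕ) *
            (if a = j then (X a : MvPolynomial (Fin n) ℚ_[p]) ^ k else 1) := by
      intro a ha
      rw [if_neg (Finset.mem_erase.mp ha).1]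
      by_cases haj : a = j
      · subst haj; rw [if_pos rfl, if_pos rfl, pow_add]
      · rw [if_neg haj, if_neg haj, mul_one]
    rw [Finset.prod_congr rfl this, Finset.prod_mul_distrib, Finset.prod_ite_eq'
      (Finset.univ.erase i) j (fun a => (X a : MvPolynomial (Fin n) ℚ_[p]) ^ k),
      if_pos (Finset.mem_erase.mpr ⟨Ne.symm hij, Finset.mem_univ j⟩)]
    ring
  calc (algebraMap ℚ_[p] (MvPolynomial (Fin n) ℚ_[p])) c *
        ((C t' * X j) ^ k * (X i) ^ ((γ.1 i:ℕ) - k) * ((γ.1 i:ℕ).choose k : MvPolynomial (Fin n) ℚ_[p]) *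
          ∏ a ∈ Finset.univ.erase i, (X a : MvPolynomial (Fin n) ℚ_[p]) ^ (γ.1 a : ℕ))
      = C (t' ^ k * (((γ.1 i : ℕ).choose k : ℚ_[p])) * c) *
          ((X i) ^ ((γ.1 i:ℕ) - k) * ((X j) ^ k *
            ∏ a ∈ Finset.univ.erase i, (X a : MvPolynomial (Fin n) ℚ_[p]) ^ (γ.1 a : ℕ))) := by
        rw [MvPolynomial.algebraMap_eq, mul_pow, ← C_pow,
          ← map_natCast (C : ℚ_[p] →+* MvPolynomial (Fin n) ℚ_[p]) ((γ.1 i:ℕ).choose k)]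
        rw [C_mul, C_mul]
        ring
    _ = monomial (σexp i j γ k) (t' ^ k * (((γ.1 i : ℕ).choose k : ℚ_[p])) * c) := by
        rw [hprod, prodXpow, C_mul_monomial, mul_one]
        rfl

lemma uEq {i j : Fin n} (hij : i ≠ j) (t : ℤ_[p]) :
    (fun a : Fin n => ∑ b, C ((((Tmat p hij t) : Matrix (Fin n) (Fin n) ℤ_[p]).map
        (algebraMap ℤ_[p] ℚ_[p])) a b) * X b)
      = fun a : Fin n => if a = i then X i + C ((t : ℚ_[p])) * X j else X a := by
  funext a
  simp only [Tmat_entry p hij t, map_add, add_mul, Finset.sum_add_distrib]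
  have h1 : ∑ x : Fin n, C (if a = x then (1:ℚ_[p]) else 0) * X x
      = (X a : MvPolynomial (Fin n) ℚ_[p]) := by
    rw [show (fun x : Fin n => C (if a = x then (1:ℚ_[p]) else 0) * X x)
        = fun x => if a = x then X x else 0 from funext fun x => by split <;> simp,
      Finset.sum_ite_eq Finset.univ a (fun b => (X b : MvPolynomial (Fin n) ℚ_[p])),
      if_pos (Finset.mem_univ a)]
  have h2 : ∑ x : Fin n, C (if a = i ∧ x = j then ((t:ℚ_[p])) else 0) * X x
      = if a = i then C ((t:ℚ_[p])) * X j else 0 := by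
    by_cases ha : a = i
    · rw [if_pos ha]
      rw [show (fun x : Fin n => C (if a = i ∧ x = j then ((t:ℚ_[p])) else 0) * X x)
          = fun x => if x = j then C ((t:ℚ_[p])) * X x else 0 from funext fun x => by
            by_cases hx : x = j <;> simp [hx, ha],
        Finset.sum_ite_eq' Finset.univ j
          (fun b => C ((t:ℚ_[p])) * (X b : MvPolynomial (Fin n) ℚ_[p])),
        if_pos (Finset.mem_univ j)]
    · rw [if_neg ha]
      refine Finset.sum_eq_zero fun x _ => by simp [ha]
  rw [h1, h2]
  split
  · rename_i h; subst h; rfl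
  · rw [add_zero]

lemma key {i j : Fin n} (hij : i ≠ j) (t : ℤ_[p]) (f : MonoIdx n d → ℚ_[p])
    (β : MonoIdx n d) :
    coeffAction p n d (Tmat p hij t) f β
      = ∑ k ∈ Finset.range (d+1), ((t:ℚ_[p]))^k * Op p i j k f β := by
  simp only [coeffAction, changeOfVar, ofCoeffs]
  rw [uEq p hij t, map_sum, coeff_sum]
  rw [Finset.sum_congr rfl (fun γ (_ : γ ∈ Finset.univ) => by
    rw [image_monomial p hij ((t:ℚ_[p])) γ (f γ), coeff_sum])]
  simp only [coeff_monomial]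
  have hsub : ∀ γ : MonoIdx n d,
      (∑ k ∈ Finset.range ((γ.1 i : ℕ)+1),
        if σexp i j γ k = (Finsupp.equivFunOnFinite.symm fun a => ((β.1 a : ℕ)))
          then (t:ℚ_[p]) ^ k * (((γ.1 i : ℕ).choose k : ℚ_[p])) * f γ else 0)
      = (∑ k ∈ Finset.range (d+1),
        if σexp i j γ k = (Finsupp.equivFunOnFinite.symm fun a => ((β.1 a : ℕ)))
          then (t:ℚ_[p]) ^ k * (((γ.1 i : ℕ).choose k : ℚ_[p])) * f γ else 0) := by
    intro γ
    refine Finset.sum_subset (Finset.range_subset_range.mpr (by have := idx_le γ i; omega))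
      (fun k _ hk => ?_)
    have hklt : (γ.1 i : ℕ) < k := by
      have := Finset.mem_range.not.mp hk; omega
    rw [Nat.choose_eq_zero_of_lt hklt]
    split <;> simp
  rw [Finset.sum_congr rfl (fun γ _ => hsub γ), Finset.sum_comm]
  refine Finset.sum_congr rfl fun k _ => ?_
  rw [Op, Finset.mul_sum]
  refine Finset.sum_congr rfl fun γ _ => ?_
  by_cases hk2 : k ≤ (γ.1 i : ℕ)
  · have hiff : (σexp i j γ k
        = (Finsupp.equivFunOnFinite.symm fun a => ((β.1 a : ℕ))))
      ↔ ((γ.1 i : ℕ) = (β.1 i : ℕ) + k ∧ (β.1 j : ℕ) = (γ.1 j : ℕ) + k ∧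
        ∀ a : Fin n, a ≠ i → a ≠ j → (γ.1 a : ℕ) = (β.1 a : ℕ)) := by
      rw [σexp, Equiv.apply_eq_iff_eq, _root_.funext_iff]
      constructor
      · intro h
        have hi := h i
        have hj := h j
        rw [if_pos rfl] at hi
        rw [if_neg (Ne.symm hij), if_pos rfl] at hj
        exact ⟨by omega, by omega, fun a hai haj => by
          have := h a; rw [if_neg hai, if_neg haj] at this; omega⟩
      · rintro ⟨g1, g2, g3⟩ a
        by_cases hai : a = i
        · subst hai; rw [if_pos rfl]; omega
        · by_cases haj : a = j
          · subst haj; rw [if_neg hai, if_pos rfl]; omega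
          · rw [if_neg hai, if_neg haj]; exact g3 a hai haj
    rw [if_congr hiff rfl rfl]
    split
    · rw [mul_assoc]
    · rw [zero_mul, mul_zero]
  · have hch : (γ.1 i : ℕ).choose k = 0 := Nat.choose_eq_zero_of_lt (by omega)
    rw [hch]
    split <;> split <;> simp

lemma isUnit_natCast_padic {m : ℕ} (_hm : 0 < m) (hnd : ¬ p ∣ m) :
    IsUnit ((m : ℤ_[p])) := by
  rw [PadicInt.isUnit_iff]
  refine le_antisymm ((m : ℤ_[p]).2) ?_
  by_contra h
  push_neg at h
  have h2 := (PadicInt.norm_int_lt_one_iff_dvd (p := p) (m : ℤ)).mp (by push_cast; exact h)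
  exact hnd (Int.natCast_dvd_natCast.mp h2)

lemma choose_isUnit (hdp : d < p) {a k : ℕ} (ha : a ≤ d) (hk : k ≤ a) :
    IsUnit ((a.choose k : ℤ_[p])) := by
  refine isUnit_natCast_padic p (Nat.choose_pos hk) fun hdvd => ?_
  have h1 : a.choose k * (k.factorial * (a - k).factorial) = a.factorial := by
    have := Nat.choose_mul_factorial_mul_factorial hk
    rw [← this]; ring
  have h2 : p ∣ a.factorial := h1 ▸ Dvd.dvd.mul_right hdvd _
  have h3 := (Nat.Prime.dvd_factorial (Fact.out)).mp h2
  omega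

lemma vand (hdp : d < p) (Λ : Submodule ℤ_[p] (MonoIdx n d → ℚ_[p]))
    (w : Fin (d+1) → (MonoIdx n d → ℚ_[p]))
    (hw : ∀ t : Fin (d+1), (∑ k : Fin (d+1), ((((t:ℕ):ℚ_[p]))^((k:ℕ))) • w k) ∈ Λ) :
    ∀ k, w k ∈ Λ := by
  intro k
  set M : Matrix (Fin (d+1)) (Fin (d+1)) ℤ_[p] :=
    Matrix.vandermonde (fun t : Fin (d+1) => ((t : ℕ) : ℤ_[p])) with hM
  have hdet : IsUnit M.det := by
    rw [hM, Matrix.det_vandermonde]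
    refine Finset.prod_induction _ IsUnit (fun _ _ => IsUnit.mul) isUnit_one
      (fun a _ => Finset.prod_induction _ IsUnit (fun _ _ => IsUnit.mul) isUnit_one
        (fun b hb => ?_))
    have hab : (a : ℕ) < (b : ℕ) := Fin.lt_def.mp (Finset.mem_Ioi.mp hb)
    have : (((b:ℕ) : ℤ_[p])) - (((a:ℕ)) : ℤ_[p]) = (((b:ℕ) - (a:ℕ) : ℕ) : ℤ_[p]) := by
      push_cast [Nat.cast_sub (le_of_lt hab)]; ring
    rw [this]
    refine isUnit_natCast_padic p (by omega) fun hdvd => ?_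
    have := Nat.le_of_dvd (by omega) hdvd
    have hb1 : (b : ℕ) < d + 1 := b.isLt
    omega
  have hkey := Matrix.nonsing_inv_mul M hdet
  have expand : w k = ∑ t : Fin (d+1), (M⁻¹ k t) •
      (∑ k' : Fin (d+1), ((((t:ℕ):ℚ_[p]))^((k':ℕ))) • w k') := by
    have step1 : ∀ t : Fin (d+1), (M⁻¹ k t) •
        (∑ k' : Fin (d+1), ((((t:ℕ):ℚ_[p]))^((k':ℕ))) • w k')
        = ∑ k' : Fin (d+1), (((M⁻¹ k t * M t k' : ℤ_[p]) : ℚ_[p])) • w k' := by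
      intro t
      rw [Finset.smul_sum]
      refine Finset.sum_congr rfl fun k' _ => ?_
      have hsc : (M⁻¹ k t) • ((((t:ℕ):ℚ_[p]))^((k':ℕ)))
          = ((M⁻¹ k t * M t k' : ℤ_[p]) : ℚ_[p]) := by
        have hM2 : M t k' = ((t:ℕ) : ℤ_[p]) ^ (k' : ℕ) := rfl
        rw [hM2]
        push_cast
        rfl
      rw [← smul_assoc, hsc]
    rw [Finset.sum_congr rfl fun t _ => step1 t, Finset.sum_comm]
    have step2 : ∀ k' : Fin (d+1),
        (∑ t : Fin (d+1), (((M⁻¹ k t * M t k' : ℤ_[p]) : ℚ_[p])) • w k')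
        = ((((M⁻¹ * M) k k' : ℤ_[p]) : ℚ_[p])) • w k' := by
      intro k'
      rw [← Finset.sum_smul, Matrix.mul_apply]
      congr 1
      exact (map_sum (PadicInt.Coe.ringHom (p := p))
        (fun j => M⁻¹ k j * M j k') Finset.univ).symm
    rw [Finset.sum_congr rfl fun k' _ => step2 k', hkey]
    have step3 : ∀ k' : Fin (d+1), ((((1 : Matrix (Fin (d+1)) (Fin (d+1)) ℤ_[p]) k k' : ℤ_[p]) : ℚ_[p])) • w k'
        = if k' = k then w k' else 0 := by
      intro k'
      rw [Matrix.one_apply]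
      by_cases h : k = k'
      · subst h; simp
      · rw [if_neg h, if_neg (Ne.symm h)]; simp
    rw [Finset.sum_congr rfl fun k' _ => step3 k', Finset.sum_ite_eq' Finset.univ k w,
      if_pos (Finset.mem_univ k)]
  rw [expand]
  exact Submodule.sum_mem Λ fun t _ => Submodule.smul_mem Λ _ (hw t)

lemma cyclic (J : Submodule ℤ_[p] ℚ_[p]) (hJ : J.FG) :
    ∃ c : ℚ_[p], J = Submodule.span ℤ_[p] {c} := by
  obtain ⟨F, rfl⟩ := hJ
  by_cases hF : ∀ x ∈ F, x = (0:ℚ_[p])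
  · refine ⟨0, le_antisymm (Submodule.span_le.mpr fun x hx => ?_) (Submodule.span_le.mpr ?_)⟩
    · rw [hF x hx]; exact Submodule.subset_span rfl
    · rintro x rfl
      exact Submodule.zero_mem _
  · push_neg at hF
    obtain ⟨x₀, hx₀F, hx₀⟩ := hF
    obtain ⟨c, hcF, hc⟩ := Finset.exists_max_image F (fun x => ‖x‖) ⟨x₀, hx₀F⟩
    have hc0 : c ≠ 0 := by
      intro h
      have := hc x₀ hx₀F
      rw [h, norm_zero] at this
      exact hx₀ (norm_le_zero_iff.mp this)
    refine ⟨c, le_antisymm (Submodule.span_le.mpr fun x hx => ?_)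
      (Submodule.span_le.mpr ?_)⟩
    · have hxc : ‖x / c‖ ≤ 1 := by
        rw [norm_div, div_le_one (norm_pos_iff.mpr hc0)]
        exact hc x hx
      rw [SetLike.mem_coe, Submodule.mem_span_singleton]
      exact ⟨⟨x / c, hxc⟩, by
        show (x / c) * c = x
        field_simp⟩
    · rintro y rfl
      exact Submodule.subset_span hcF

instance : ContinuousSMul ℤ_[p] ℚ_[p] := by
  constructor
  have h : (fun zq : ℤ_[p] × ℚ_[p] => zq.1 • zq.2)
      = fun zq : ℤ_[p] × ℚ_[p] => ((zq.1 : ℚ_[p]) * zq.2) := rfl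
  rw [h]
  exact (continuous_subtype_val.comp continuous_fst).mul continuous_snd

/-- `coeffAction` as a `ℚ_p`-linear map. -/
def coeffActionL (g : GL (Fin n) ℤ_[p]) :
    (MonoIdx n d → ℚ_[p]) →ₗ[ℚ_[p]] (MonoIdx n d → ℚ_[p]) where
  toFun := coeffAction p n d g
  map_add' f1 f2 := by
    funext β
    have hadd : ofCoeffs p n d (f1 + f2) = ofCoeffs p n d f1 + ofCoeffs p n d f2 := by
      rw [ofCoeffs, ofCoeffs, ofCoeffs, ← Finset.sum_add_distrib]
      exact Finset.sum_congr rfl fun α _ => by rw [Pi.add_apply, map_add]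
    simp only [coeffAction, Pi.add_apply]
    rw [hadd, map_add, coeff_add]
  map_smul' c f := by
    funext β
    have hsmul : ofCoeffs p n d (c • f) = c • ofCoeffs p n d f := by
      rw [ofCoeffs, ofCoeffs, Finset.smul_sum]
      exact Finset.sum_congr rfl fun α _ => by rw [Pi.smul_apply, _root_.map_smul]
    simp only [coeffAction, RingHom.id_apply, Pi.smul_apply]
    rw [hsmul, _root_.map_smul, coeff_smul]

lemma lattice_closed (Λ : Submodule ℤ_[p] (MonoIdx n d → ℚ_[p])) (hfg : Λ.FG) :
    IsClosed (Λ : Set (MonoIdx n d → ℚ_[p])) := by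
  obtain ⟨S, hS⟩ := hfg
  have hrange : (Λ : Set (MonoIdx n d → ℚ_[p]))
      = Set.range (fun c : {x // x ∈ S} → ℤ_[p] =>
          ∑ i ∈ S.attach, c i • (i : {x // x ∈ S}).1) := by
    ext x
    constructor
    · intro hx
      rw [← hS] at hx
      obtain ⟨f, -, hf⟩ := Submodule.mem_span_finset.mp hx
      refine ⟨fun i => f i.1, ?_⟩
      rw [← hf]
      exact Finset.sum_attach S (fun i => f i • i)
    · rintro ⟨c, rfl⟩
      refine Submodule.sum_mem Λ fun i _ => Submodule.smul_mem Λ _ ?_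
      rw [← hS]
      exact Submodule.subset_span i.2
  rw [hrange]
  refine IsCompact.isClosed (isCompact_range ?_)
  exact continuous_finset_sum _ fun i _ => (continuous_apply i).smul continuous_const

end InvGauss

open InvGauss

/-- Let `p > d` and let `Λ` be a `ℤ_p`-lattice in `V = ℚ_p[x_1,…,x_n]_{(d)}` (read in
the coordinates given by the monomial basis).  Let `μ_Λ` be the Gaussian measure
attached to `Λ`, i.e. the unique probability measure giving `Λ` full mass and invariant
under translation by elements of `Λ` (the pushforward to `V` of the normalized Haar
measure on the compact group `Λ`).  If `μ_Λ` is invariant under the change-of-variables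
action of `GL(n,ℤ_p)`, then `Λ = c • L₀` for some `c ∈ ℚ_p^×`; hence there is, up to
scaling, a unique nondegenerate invariant Gaussian distribution on `V`. -/
theorem invariant_gaussian_unique_up_to_scaling
    (p : ℕ) [Fact p.Prime] (n d : ℕ) (hn : 1 ≤ n) (hd : 1 ≤ d) (hpd : d < p)
    (Λ : Submodule ℤ_[p] (MonoIdx n d → ℚ_[p]))
    (hfg : Λ.FG)
    (hspan : Submodule.span ℚ_[p] (Λ : Set (MonoIdx n d → ℚ_[p])) = ⊤)
    (μ : Measure (MonoIdx n d → ℚ_[p])) [IsProbabilityMeasure μ]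
    (hmass : μ (Λ : Set (MonoIdx n d → ℚ_[p])) = 1)
    (htrans : ∀ v ∈ Λ, Measure.map (· + v) μ = μ)
    (hinv : ∀ g : GL (Fin n) ℤ_[p], Measure.map (coeffAction p n d g) μ = μ) :
    ∃ c : ℚ_[p]ˣ, Λ = (c : ℚ_[p]) • monomialLatticeCoeff p n d := by
  classical
  haveI : BorelSpace ℚ_[p] := ⟨rfl⟩
  have hn0 : 0 < n := hn
  set i0 : Fin n := ⟨0, hn0⟩ with hi0
  -- Λ is measurable
  have hΛmeas : MeasurableSet (Λ : Set (MonoIdx n d → ℚ_[p])) :=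
    (lattice_closed p Λ hfg).measurableSet
  -- characterization of Λ via translation invariance
  have hchar : ∀ v : MonoIdx n d → ℚ_[p], Measure.map (· + v) μ = μ → v ∈ Λ := by
    intro v hv
    by_contra hvn
    have hmeasadd : Measurable (· + v) :=
      (continuous_id.add continuous_const).measurable
    have h1 : μ ((· + v) ⁻¹' (Λ : Set _)) = 1 := by
      rw [← Measure.map_apply hmeasadd hΛmeas, hv, hmass]
    have hdisj : Disjoint ((· + v) ⁻¹' (Λ : Set _)) (Λ : Set _) := by
      rw [Set.disjoint_left]
      intro x hx1 hx2
      have h := Λ.sub_mem hx1 hx2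
      rw [add_sub_cancel_left] at h
      exact hvn h
    have hun : μ (((· + v) ⁻¹' (Λ : Set _)) ∪ (Λ : Set _))
        = μ ((· + v) ⁻¹' (Λ : Set _)) + μ (Λ : Set _) :=
      measure_union₀ hΛmeas.nullMeasurableSet hdisj.aedisjoint
    have hle : μ (((· + v) ⁻¹' (Λ : Set _)) ∪ (Λ : Set _)) ≤ μ Set.univ :=
      measure_mono (Set.subset_univ _)
    rw [hun, h1, hmass, measure_univ] at hle
    norm_num at hle
  -- stability of Λ under the action
  have hstab : ∀ (g : GL (Fin n) ℤ_[p]), ∀ v ∈ Λ, coeffAction p n d g v ∈ Λ := by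
    intro g v hv
    have hTcont : Continuous (coeffActionL (n := n) (d := d) p g) :=
      LinearMap.continuous_of_finiteDimensional _
    have hTmeas : Measurable (coeffAction p n d g) := hTcont.measurable
    refine hchar _ ?_
    have hmeasadd : ∀ u : MonoIdx n d → ℚ_[p], Measurable (· + u) :=
      fun u => (continuous_id.add continuous_const).measurable
    calc Measure.map (· + coeffAction p n d g v) μ
        = Measure.map (· + coeffAction p n d g v)
            (Measure.map (coeffAction p n d g) μ) := by rw [hinv g]
      _ = Measure.map ((· + coeffAction p n d g v) ∘ (coeffAction p n d g)) μ := by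
            rw [Measure.map_map (hmeasadd _) hTmeas]
      _ = Measure.map ((coeffAction p n d g) ∘ (· + v)) μ := by
            congr 1
            funext x
            show coeffAction p n d g x + coeffAction p n d g v
              = coeffAction p n d g (x + v)
            exact (map_add (coeffActionL (n := n) (d := d) p g) x v).symm
      _ = Measure.map (coeffAction p n d g) (Measure.map (· + v) μ) := by
            rw [Measure.map_map hTmeas (hmeasadd v)]
      _ = Measure.map (coeffAction p n d g) μ := by rw [htrans v hv]
      _ = μ := hinv g
  -- stability under the divided-power operators
  have hOp : ∀ (i j : Fin n), i ≠ j → ∀ k : ℕ, k ≤ d →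
      ∀ f ∈ Λ, Op p i j k f ∈ Λ := by
    intro i j hij k hk f hf
    have hw : ∀ t : Fin (d+1),
        (∑ k' : Fin (d+1), ((((t:ℕ):ℚ_[p]))^((k':ℕ))) • Op p i j (k':ℕ) f) ∈ Λ := by
      intro t
      have heq : (∑ k' : Fin (d+1), ((((t:ℕ):ℚ_[p]))^((k':ℕ))) • Op p i j (k':ℕ) f)
          = coeffAction p n d (Tmat p hij (((t:ℕ)) : ℤ_[p])) f := by
        funext β
        rw [Finset.sum_apply, key p hij (((t:ℕ)) : ℤ_[p]) f β,
          ← Fin.sum_univ_eq_sum_range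
            (fun k'' => ((((t:ℕ) : ℤ_[p])) : ℚ_[p])^k'' * Op p i j k'' f β) (d+1)]
        refine Finset.sum_congr rfl fun k' _ => ?_
        rw [Pi.smul_apply, smul_eq_mul]
        norm_cast
      rw [heq]
      exact hstab _ f hf
    have h := vand p hpd Λ (fun k' : Fin (d+1) => Op p i j (k' : ℕ) f) hw
      ⟨k, by omega⟩
    exact h
  -- the coefficient functional at x_1^d
  set φL : (MonoIdx n d → ℚ_[p]) →ₗ[ℤ_[p]] ℚ_[p] :=
    { toFun := fun f => f (eAt i0),
      map_add' := fun _ _ => rfl,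
      map_smul' := fun _ _ => rfl } with hφL
  obtain ⟨c, hc⟩ := cyclic p (Submodule.map φL Λ) (Submodule.FG.map _ hfg)
  -- extraction of coefficients
  have hext : ∀ m : ℕ, ∀ α : MonoIdx n d, d - (α.1 i0 : ℕ) = m →
      ∀ f ∈ Λ, f α ∈ Submodule.map φL Λ := by
    intro m
    induction m using Nat.strong_induction_on with
    | _ m IH =>
      intro α hα f hf
      by_cases hα0 : (α.1 i0 : ℕ) = d
      · have hα' : α = eAt i0 := eq_eAt_of_coord hα0
        subst hα'
        exact ⟨f, hf, rfl⟩
      · have hlt : (α.1 i0 : ℕ) < d := lt_of_le_of_ne (idx_le α i0) hα0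
        have hsum := α.2
        have hex : ∃ b ∈ Finset.univ.erase i0, (α.1 b : ℕ) ≠ 0 := by
          by_contra hall
          push_neg at hall
          have hz : ∑ a ∈ Finset.univ.erase i0, (α.1 a : ℕ) = 0 :=
            Finset.sum_eq_zero fun a ha => hall a ha
          rw [← Finset.add_sum_erase Finset.univ _ (Finset.mem_univ i0), hz] at hsum
          omega
        obtain ⟨b, hbmem, hb0⟩ := hex
        have hbi : i0 ≠ b := (Finset.mem_erase.mp hbmem).1.symm
        have hpl := pair_le α hbi
        have hf' : Op p b i0 ((α.1 b : ℕ)) f ∈ Λ :=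
          hOp b i0 (Ne.symm hbi) _ (idx_le α b) f hf
        have heval : Op p b i0 ((α.1 b : ℕ)) f (moveAll α i0 b hbi) = f α := by
          rw [Op_eval p (Ne.symm hbi) _ f (moveAll α i0 b hbi) α
            (by rw [moveAll_b]; omega)
            (by rw [moveAll_i])
            (fun a hab hai => (moveAll_other α i0 b hbi a hai hab).symm),
            Nat.choose_self, Nat.cast_one, one_mul]
        have hlt2 : d - ((moveAll α i0 b hbi).1 i0 : ℕ) < m := by
          rw [moveAll_i]; omega
        have hres := IH _ hlt2 (moveAll α i0 b hbi) rfl _ hf'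
        rwa [heval] at hres
  have hextAll : ∀ f ∈ Λ, ∀ α, f α ∈ Submodule.map φL Λ :=
    fun f hf α => hext _ α rfl f hf
  -- realize the generator
  have hcJ : c ∈ Submodule.map φL Λ := hc ▸ Submodule.subset_span rfl
  obtain ⟨f₀, hf₀Λ, hf₀⟩ := hcJ
  -- base case of generation
  have hbase : Pi.single (eAt i0 : MonoIdx n d) c ∈ Λ := by
    by_cases hn2 : 2 ≤ n
    · have h01 : i0 ≠ (⟨1, hn2⟩ : Fin n) := by
        intro h
        have := congrArg Fin.val h
        simp [hi0] at this
      have hg1 : Op p i0 ⟨1, hn2⟩ d f₀ ∈ Λ := hOp i0 ⟨1, hn2⟩ h01 d le_rfl f₀ hf₀Λ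
      rw [Op_big p h01 f₀] at hg1
      have hg2 : Op p ⟨1, hn2⟩ i0 d
          (Pi.single (eAt ⟨1, hn2⟩) (f₀ (eAt i0))) ∈ Λ :=
        hOp ⟨1, hn2⟩ i0 (Ne.symm h01) d le_rfl _ hg1
      rw [Op_big p (Ne.symm h01), Pi.single_eq_same] at hg2
      rwa [show f₀ (eAt i0) = c from hf₀] at hg2
    · have hn1 : n = 1 := by omega
      have hallfin : ∀ a : Fin n, a = i0 := fun a => Fin.ext (by
        have := a.isLt; omega)
      have hall : ∀ α : MonoIdx n d, α = eAt i0 := by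
        intro α
        refine eq_eAt_of_coord ?_
        have hsum := α.2
        rw [Finset.sum_eq_single_of_mem i0 (Finset.mem_univ i0)
          (fun b _ hb => absurd (hallfin b) hb)] at hsum
        exact hsum
      have hfeq : f₀ = Pi.single (eAt i0) c := by
        funext α
        rw [hall α, Pi.single_eq_same]
        exact hf₀
      exact hfeq ▸ hf₀Λ
  -- generation of all monomial multiples of c
  have hgen : ∀ m : ℕ, ∀ α : MonoIdx n d, d - (α.1 i0 : ℕ) = m →
      Pi.single α c ∈ Λ := by
    intro m
    induction m using Nat.strong_induction_on with
    | _ m IH =>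
      intro α hα
      by_cases hα0 : (α.1 i0 : ℕ) = d
      · rw [eq_eAt_of_coord hα0]; exact hbase
      · have hlt : (α.1 i0 : ℕ) < d := lt_of_le_of_ne (idx_le α i0) hα0
        have hsum := α.2
        have hex : ∃ b ∈ Finset.univ.erase i0, (α.1 b : ℕ) ≠ 0 := by
          by_contra hall
          push_neg at hall
          have hz : ∑ a ∈ Finset.univ.erase i0, (α.1 a : ℕ) = 0 :=
            Finset.sum_eq_zero fun a ha => hall a ha
          rw [← Finset.add_sum_erase Finset.univ _ (Finset.mem_univ i0), hz] at hsum
          omega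
        obtain ⟨b, hbmem, hb0⟩ := hex
        have hbi : i0 ≠ b := (Finset.mem_erase.mp hbmem).1.symm
        have hpl := pair_le α hbi
        have hlt2 : d - ((moveAll α i0 b hbi).1 i0 : ℕ) < m := by
          rw [moveAll_i]; omega
        have hβΛ : Pi.single (moveAll α i0 b hbi) c ∈ Λ := IH _ hlt2 _ rfl
        have hOpβ : Op p i0 b ((α.1 b : ℕ)) (Pi.single (moveAll α i0 b hbi) c) ∈ Λ :=
          hOp i0 b hbi _ (idx_le α b) _ hβΛ
        rw [Op_single p hbi _ c (moveAll α i0 b hbi) α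
          (by rw [moveAll_i]) (by rw [moveAll_b]; omega)
          (fun a hai hab => moveAll_other α i0 b hbi a hai hab)] at hOpβ
        have hu : IsUnit (((((moveAll α i0 b hbi).1 i0 : ℕ)).choose ((α.1 b : ℕ)) : ℤ_[p])) :=
          choose_isUnit p hpd (idx_le (moveAll α i0 b hbi) i0) (by rw [moveAll_i]; omega)
        set u : ℕ := (((moveAll α i0 b hbi).1 i0 : ℕ)).choose ((α.1 b : ℕ)) with hu'
        have hsm : (Pi.single α ((u : ℚ_[p]) * c) : MonoIdx n d → ℚ_[p])
            = ((u : ℤ_[p])) • (Pi.single α c : MonoIdx n d → ℚ_[p]) := by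
          funext γ
          by_cases hγ : γ = α
          · subst hγ
            rw [Pi.single_eq_same, Pi.smul_apply, Pi.single_eq_same]
            show (u : ℚ_[p]) * c = (((u : ℤ_[p])) : ℚ_[p]) * c
            push_cast
            ring
          · rw [Pi.single_eq_of_ne hγ, Pi.smul_apply, Pi.single_eq_of_ne hγ, smul_zero]
        rw [hsm] at hOpβ
        obtain ⟨U, hU⟩ := hu
        have hfin : (Pi.single α c : MonoIdx n d → ℚ_[p])
            = ((U⁻¹ : ℤ_[p]ˣ) : ℤ_[p]) • (((u : ℤ_[p])) • (Pi.single α c : MonoIdx n d → ℚ_[p])) := by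
          rw [smul_smul, ← hU, ← Units.val_mul, inv_mul_cancel, Units.val_one, one_smul]
        rw [hfin]
        exact Λ.smul_mem _ hOpβ
  -- the generator is nonzero
  have hc0 : c ≠ 0 := by
    intro h
    subst h
    have hzero : ∀ f ∈ Λ, f = 0 := by
      intro f hf
      funext α
      obtain ⟨z, hz⟩ := Submodule.mem_span_singleton.mp (hc ▸ hextAll f hf α)
      rw [← hz, smul_zero]
      rfl
    have hbot : Submodule.span ℚ_[p] (Λ : Set (MonoIdx n d → ℚ_[p])) ≤ ⊥ := by
      rw [Submodule.span_le]
      intro x hx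
      rw [SetLike.mem_coe, Submodule.mem_bot]
      exact hzero x hx
    have h1 : (Pi.single (eAt i0) (1:ℚ_[p]) : MonoIdx n d → ℚ_[p])
        ∈ Submodule.span ℚ_[p] (Λ : Set (MonoIdx n d → ℚ_[p])) := by
      rw [hspan]; exact Submodule.mem_top
    have h4 := Submodule.mem_bot ℚ_[p] |>.mp (hbot h1)
    have h5 := congrFun h4 (eAt i0)
    rw [Pi.single_eq_same] at h5
    exact one_ne_zero h5
  refine ⟨Units.mk0 c hc0, ?_⟩
  show Λ = c • monomialLatticeCoeff p n d
  apply le_antisymm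
  · intro x hx
    have hy : ∀ α, ∃ z : ℤ_[p], x α = ((z:ℚ_[p])) * c := by
      intro α
      obtain ⟨z, hz⟩ := Submodule.mem_span_singleton.mp (hc ▸ hextAll x hx α)
      exact ⟨z, by rw [← hz]; rfl⟩
    choose z hz using hy
    have hyL : (c⁻¹ • x) ∈ monomialLatticeCoeff p n d := by
      have hxe : c⁻¹ • x = ∑ α : MonoIdx n d,
          z α • (Pi.single α (1:ℚ_[p]) : MonoIdx n d → ℚ_[p]) := by
        funext γ
        rw [Finset.sum_apply]
        have hterm : ∀ α ∈ Finset.univ,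
            (z α • (Pi.single α (1:ℚ_[p]) : MonoIdx n d → ℚ_[p])) γ
            = if γ = α then ((z α : ℚ_[p])) else 0 := by
          intro α _
          by_cases hγα : γ = α
          · subst hγα
            rw [if_pos rfl, Pi.smul_apply, Pi.single_eq_same]
            show (z γ : ℚ_[p]) * 1 = _
            ring
          · rw [if_neg hγα, Pi.smul_apply, Pi.single_eq_of_ne hγα, smul_zero]
        rw [Finset.sum_congr rfl hterm, Finset.sum_ite_eq Finset.univ γ
          (fun α => ((z α : ℚ_[p]))), if_pos (Finset.mem_univ γ)]
        show c⁻¹ * x γ = _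
        rw [hz γ]
        field_simp
      rw [hxe]
      exact Submodule.sum_mem _ fun α _ =>
        Submodule.smul_mem _ _ (Submodule.subset_span ⟨α, rfl⟩)
    have hmem := Submodule.smul_mem_pointwise_smul (c⁻¹ • x) c
      (monomialLatticeCoeff p n d) hyL
    rwa [smul_inv_smul₀ hc0] at hmem
  · intro x hx
    have hx' : x ∈ (c • (monomialLatticeCoeff p n d : Set (MonoIdx n d → ℚ_[p]))) := by
      rw [← Submodule.coe_pointwise_smul]
      exact hx
    obtain ⟨y, hy, rfl⟩ := hx'
    refine Submodule.span_induction
      (p := fun y _ => c • y ∈ Λ) ?_ ?_ ?_ ?_ hy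
    · rintro _ ⟨α, rfl⟩
      have hcs : c • (Pi.single α (1:ℚ_[p]) : MonoIdx n d → ℚ_[p])
          = (Pi.single α c : MonoIdx n d → ℚ_[p]) := by
        funext γ
        by_cases hγα : γ = α
        · subst hγα
          rw [Pi.smul_apply, Pi.single_eq_same, Pi.single_eq_same, smul_eq_mul, mul_one]
        · rw [Pi.smul_apply, Pi.single_eq_of_ne hγα, Pi.single_eq_of_ne hγα, smul_zero]
      rw [hcs]
      exact hgen _ α rfl
    · show c • (0 : MonoIdx n d → ℚ_[p]) ∈ Λ
      rw [smul_zero]; exact Λ.zero_mem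
    · intro a b _ _ ha hb
      show c • (a + b) ∈ Λ
      rw [smul_add]; exact Λ.add_mem ha hb
    · intro zz a _ ha
      show c • (zz • a) ∈ Λ
      rw [smul_comm]
      exact Λ.smul_mem zz ha

end
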